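/- Let q ≥ 3 be an odd integer and let Pₙ be the polynomials defined by P₀(x) = 1, P₁(x) = x, P_{n+1}(x) = ((q+1)/q)·x·Pₙ(x) − (1/q)·P_{n−1}(x). Then for every n ≥ 1 and every s ∈ [−1,1], |Pₙ(s) − sⁿ| ≤ 2(n−1)/q. In particular, for each fixed n, sup_{s ∈ [−1,1]} |Pₙ(s) − sⁿ| → 0 as q → ∞. -/

import Mathlib

/-!
Write `eₙ = Pₙ₊₁(s) − s·Pₙ(s)`. The recurrence gives `q·eₙ₊₁ = s·eₙ − (1 − s²)·Pₙ(s)`, from which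
one shows by a joint induction that `|Pₙ(s)| ≤ 1` and `|eₙ| ≤ (1 − s²)/(q − 1)` on `[−1, 1]` when `q ≥ 3`;
that is what makes `(1 − s²)/(q − 1) ≤ 1 − |s|`, which keeps `|Pₙ₊₁(s)| ≤ |s|·|Pₙ(s)| + |eₙ| ≤ 1`.
Then `Pₙ₊₁(s) − sⁿ⁺¹ = s·(Pₙ(s) − sⁿ) + eₙ`, so each step adds at most `(1 − s²)/(q − 1) ≤ 2/q`.
-/

noncomputable section

/-- The spherical polynomials `Pₙ` for the parameter `q`:
`P₀ = 1`, `P₁ = X`, `P_{n+2}(x) = ((q+1)/q)·x·P_{n+1}(x) − (1/q)·Pₙ(x)`. -/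
def P (q : ℝ) : ℕ → ℝ → ℝ
  | 0 => fun _ => 1
  | 1 => fun s => s
  | (n + 2) => fun s => ((q + 1) / q) * s * P q (n + 1) s - (1 / q) * P q n s

theorem P_succ_succ_sub_mul {q : ℝ} (hq : q ≠ 0) (n : ℕ) (s : ℝ) :
    P q (n + 2) s - s * P q (n + 1) s =
      (s * (P q (n + 1) s - s * P q n s) - (1 - s ^ 2) * P q n s) / q := by
  simp only [P]
  field_simp
  ring

theorem one_sub_sq_div_le_one_sub_abs {q s : ℝ} (hq : 3 ≤ q) (hs : |s| ≤ 1) :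
    (1 - s ^ 2) / (q - 1) ≤ 1 - |s| := by
  rw [div_le_iff₀ (by linarith), ← sq_abs]
  nlinarith [abs_nonneg s]

theorem abs_P_le_one_and_abs_P_succ_sub_mul_le {q s : ℝ} (hq : 3 ≤ q) (hs : |s| ≤ 1) (n : ℕ) :
    |P q n s| ≤ 1 ∧ |P q (n + 1) s - s * P q n s| ≤ (1 - s ^ 2) / (q - 1) := by
  have hq1 : 0 < q - 1 := by linarith
  have hs2 : 0 ≤ 1 - s ^ 2 := by nlinarith [sq_abs s, abs_nonneg s]
  induction n with
  | zero => simpa [P] using div_nonneg hs2 hq1.le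
  | succ n ih =>
    obtain ⟨ha, he⟩ := ih
    set a := P q n s
    set b := P q (n + 1) s
    have hb : |b| ≤ 1 :=
      calc |b| = |s * a + (b - s * a)| := by ring_nf
        _ ≤ |s| * |a| + |b - s * a| := by rw [← abs_mul]; exact abs_add_le _ _
        _ ≤ |s| * 1 + (1 - |s|) := by
          gcongr
          exact he.trans (one_sub_sq_div_le_one_sub_abs hq hs)
        _ = 1 := by ring
    refine ⟨hb, ?_⟩
    rw [P_succ_succ_sub_mul (by linarith), abs_div, abs_of_pos (by linarith : 0 < q),
      div_le_iff₀ (by linarith)]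
    calc |s * (b - s * a) - (1 - s ^ 2) * a|
        ≤ |s| * |b - s * a| + (1 - s ^ 2) * |a| := by
          rw [← abs_mul, ← abs_of_nonneg hs2, ← abs_mul, abs_of_nonneg hs2]
          exact abs_sub _ _
      _ ≤ 1 * ((1 - s ^ 2) / (q - 1)) + (1 - s ^ 2) * 1 := by gcongr
      _ = (1 - s ^ 2) / (q - 1) * q := by field_simp; ring

theorem abs_P_succ_sub_pow_le {q s : ℝ} (hq : 3 ≤ q) (hs : |s| ≤ 1) (n : ℕ) :
    |P q (n + 1) s - s ^ (n + 1)| ≤ n * ((1 - s ^ 2) / (q - 1)) := by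
  induction n with
  | zero => simp [P]
  | succ n ih =>
    have he := (abs_P_le_one_and_abs_P_succ_sub_mul_le hq hs (n + 1)).2
    have hε : 0 ≤ (1 - s ^ 2) / (q - 1) := (abs_nonneg _).trans he
    calc |P q (n + 2) s - s ^ (n + 2)|
        = |s * (P q (n + 1) s - s ^ (n + 1)) + (P q (n + 2) s - s * P q (n + 1) s)| := by
          ring_nf
      _ ≤ |s| * |P q (n + 1) s - s ^ (n + 1)| + |P q (n + 2) s - s * P q (n + 1) s| := by
          rw [← abs_mul]; exact abs_add_le _ _
      _ ≤ 1 * (n * ((1 - s ^ 2) / (q - 1))) + (1 - s ^ 2) / (q - 1) := by gcongr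
      _ = ((n + 1 : ℕ) : ℝ) * ((1 - s ^ 2) / (q - 1)) := by push_cast; ring

theorem one_sub_sq_div_le_two_div {q s : ℝ} (hq : 2 ≤ q) :
    (1 - s ^ 2) / (q - 1) ≤ 2 / q := by
  rw [div_le_div_iff₀ (by linarith) (by linarith)]
  nlinarith [sq_nonneg s]

theorem abs_P_succ_sub_pow_le_two_mul_div {q s : ℝ} (hq : 3 ≤ q) (hs : |s| ≤ 1) (n : ℕ) :
    |P q (n + 1) s - s ^ (n + 1)| ≤ 2 * n / q :=
  calc |P q (n + 1) s - s ^ (n + 1)| ≤ n * ((1 - s ^ 2) / (q - 1)) :=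
        abs_P_succ_sub_pow_le hq hs n
    _ ≤ n * (2 / q) :=
        mul_le_mul_of_nonneg_left (one_sub_sq_div_le_two_div (by linarith)) n.cast_nonneg
    _ = 2 * n / q := by ring

theorem abs_P_sub_pow_le {q s : ℝ} (hq : 3 ≤ q) (hs : |s| ≤ 1) (n : ℕ) :
    |P q n s - s ^ n| ≤ 2 * n / q := by
  cases n with
  | zero => simp [P]
  | succ n =>
    refine (abs_P_succ_sub_pow_le_two_mul_div hq hs n).trans ?_
    gcongr
    linarith

theorem P_close_to_pow :
    (∀ q : ℕ, 3 ≤ q → Odd q → ∀ n : ℕ, 1 ≤ n → ∀ s ∈ Set.Icc (-1 : ℝ) 1,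
      |P (q : ℝ) n s - s ^ n| ≤ 2 * ((n : ℝ) - 1) / (q : ℝ)) ∧
    (∀ n : ℕ, Filter.Tendsto
      (fun r : ℕ => ⨆ s : Set.Icc (-1 : ℝ) 1, |P (2 * (r : ℝ) - 1) n (s : ℝ) - (s : ℝ) ^ n|)
      Filter.atTop (nhds 0)) := by
  constructor
  · rintro q hq - n hn s ⟨hs₁, hs₂⟩
    obtain ⟨m, rfl⟩ := Nat.exists_eq_add_of_le' hn
    have hq3 : (3 : ℝ) ≤ q := by exact_mod_cast hq
    simpa using abs_P_succ_sub_pow_le_two_mul_div hq3 (abs_le.mpr ⟨hs₁, hs₂⟩) m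
  · intro n
    have hq : Filter.Tendsto (fun r : ℕ => 2 * (r : ℝ) - 1) Filter.atTop Filter.atTop :=
      Filter.tendsto_atTop_add_const_right _ _
        (tendsto_natCast_atTop_atTop.const_mul_atTop two_pos)
    refine tendsto_of_tendsto_of_tendsto_of_le_of_le' tendsto_const_nhds
      ((tendsto_const_nhds (x := 2 * (n : ℝ))).div_atTop hq)
      (Filter.Eventually.of_forall fun r => Real.iSup_nonneg fun s => abs_nonneg _) ?_
    filter_upwards [Filter.eventually_ge_atTop 2] with r hr
    have hq3 : (3 : ℝ) ≤ 2 * r - 1 := by linarith [show (2 : ℝ) ≤ r by exact_mod_cast hr]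
    exact Real.iSup_le (fun s => abs_P_sub_pow_le hq3 (abs_le.mpr s.2) n) (by positivity)
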